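/- Let K be a field and α, β ∈ K. Let m, n ≥ 1 be natural numbers with n ≡ m (mod 2), and suppose that f_α(n−1) = f_β(m−1) ≠ 0 and f_α(n) = f_β(m). Then f_α(n+1) = f_β(m+1), and consequently A₀^n = A₁^m, where A₀ = [[α, 1],[1, 0]] and A₁ = [[β, 1],[1, 0]]; i.e., the messages 0^n and 1^m collide under the generalized Tillich–Zémor hash function with generators A₀ and A₁. -/
import Mathlib


/-- The sequence `f_a` with `f_a(0) = 0`, `f_a(1) = 1`, `f_a(n+2) = a·f_a(n+1) + f_a(n)`,
governing the powers of the Tillich–Zémor generator `Y_a = !![a, 1; 1, 0]`. -/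
def tzSeq {K : Type*} [Field K] (a : K) : ℕ → K
  | 0 => 0
  | 1 => 1
  | n + 2 => a * tzSeq a (n + 1) + tzSeq a n

lemma tz_pow {K : Type*} [Field K] (a : K) :
    ∀ n, 1 ≤ n → (!![a, 1; 1, 0] : Matrix (Fin 2) (Fin 2) K) ^ n =
      !![tzSeq a (n + 1), tzSeq a n; tzSeq a n, tzSeq a (n - 1)]
  | 1, _ => by
    simp [tzSeq, pow_one]
  | n + 2, _ => by
    rw [pow_succ, tz_pow a (n + 1) (by omega)]
    ext i j
    fin_cases i <;> fin_cases j <;>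
      simp [Matrix.mul_apply, Fin.sum_univ_succ, tzSeq] <;> ring

lemma tz_det {K : Type*} [Field K] (a : K) (n : ℕ) (hn : 1 ≤ n) :
    tzSeq a (n + 1) * tzSeq a (n - 1) - tzSeq a n * tzSeq a n = (-1 : K) ^ n := by
  have h := congrArg Matrix.det (tz_pow a n hn)
  rw [Matrix.det_pow] at h
  simp [Matrix.det_fin_two_of] at h
  linear_combination -h

/-- A collision criterion for the generalized Tillich–Zémor hash function
with generators `A₀ = !![α, 1; 1, 0]` and `A₁ = !![β, 1; 1, 0]`: if `n ≡ m (mod 2)`,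
`f_α(n-1) = f_β(m-1) ≠ 0` and `f_α(n) = f_β(m)`, then `f_α(n+1) = f_β(m+1)` and
`A₀^n = A₁^m`, i.e. the messages `0^n` and `1^m` collide. -/
theorem tz_collision_criterion {K : Type*} [Field K] (α β : K)
    (m n : ℕ) (hm : 1 ≤ m) (hn : 1 ≤ n) (hpar : n ≡ m [MOD 2])
    (h1 : tzSeq α (n - 1) = tzSeq β (m - 1)) (h1' : tzSeq β (m - 1) ≠ 0)
    (h2 : tzSeq α n = tzSeq β m) :
    tzSeq α (n + 1) = tzSeq β (m + 1) ∧
    (!![α, 1; 1, 0] : Matrix (Fin 2) (Fin 2) K) ^ n =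
      (!![β, 1; 1, 0] : Matrix (Fin 2) (Fin 2) K) ^ m := by
  have hsign : ((-1 : K)) ^ n = (-1 : K) ^ m := by
    have hmod : n % 2 = m % 2 := hpar
    rcases Nat.even_or_odd n with he | ho
    · have hem : Even m := by rw [Nat.even_iff] at *; omega
      rw [he.neg_one_pow, hem.neg_one_pow]
    · have hom : Odd m := by rw [Nat.odd_iff] at *; omega
      rw [ho.neg_one_pow, hom.neg_one_pow]
  have hda := tz_det α n hn
  have hdb := tz_det β m hm
  have key : tzSeq α (n + 1) * tzSeq β (m - 1) = tzSeq β (m + 1) * tzSeq β (m - 1) := by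
    have e : tzSeq α (n + 1) * tzSeq α (n - 1) = tzSeq β (m + 1) * tzSeq β (m - 1) := by
      linear_combination hda - hdb + hsign + (tzSeq α n + tzSeq β m) * h2
    rw [h1] at e; exact e
  have h3 : tzSeq α (n + 1) = tzSeq β (m + 1) :=
    mul_right_cancel₀ h1' key
  refine ⟨h3, ?_⟩
  rw [tz_pow α n hn, tz_pow β m hm, h1, h2, h3]
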